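/- Let M be a compact metric space, φ a continuous flow on M, and H ⊆ M a nonsingular compact invariant set (H contains no fixed point of φ). If H has the finite pseudo-orbit tracing property (FPOTP), then H has the strong pseudo-orbit tracing property (SPOTP). -/

import Mathlib

/-- Partial time sums of a bi-infinite chain: `S 0 = 0`, `S i = t 0 + ⋯ + t (i-1)` for `i > 0`,
and `S i = -(t (-1) + ⋯ + t i)` for `i < 0`. -/
noncomputable def chainS (t : ℤ → ℝ) (i : ℤ) : ℝ :=
  if 0 ≤ i then ∑ j ∈ Finset.range i.toNat, t (j : ℤ)
  else -∑ j ∈ Finset.range (-i).toNat, t (-((j : ℤ) + 1))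

/-- Partial time sums of a finite chain: `S 0 = 0`, `S i = t 0 + ⋯ + t (i-1)`. -/
noncomputable def finChainS (t : ℕ → ℝ) (i : ℕ) : ℝ := ∑ j ∈ Finset.range i, t j

/-- `g` is a reparametrization: continuous, strictly increasing, `g 0 = 0`. -/
def IsRep (g : ℝ → ℝ) : Prop := Continuous g ∧ StrictMono g ∧ g 0 = 0

/-- `g` is a surjective reparametrization (the class `Rep*`). -/
def IsRepStar (g : ℝ → ℝ) : Prop := IsRep g ∧ Function.Surjective g

/-- The class `Rep(ε)`: surjective reparametrizations whose difference quotients are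
ε-close to 1. -/
def IsRepEps (ε : ℝ) (g : ℝ → ℝ) : Prop :=
  IsRepStar g ∧ ∀ s t : ℝ, s ≠ t → |(g s - g t) / (s - t) - 1| ≤ ε

variable {M : Type*} [MetricSpace M]

/-- `{x i ; t i}_{i ∈ ℤ}` is a (bi-infinite) `(δ,T)`-chain of `H` for the flow `φ`. -/
def IsChainDT (φ : ℝ → M → M) (H : Set M) (δ T : ℝ) (x : ℤ → M) (t : ℤ → ℝ) : Prop :=
  (∀ i, x i ∈ H) ∧ (∀ i, T ≤ t i) ∧ ∀ i, dist (φ (t i) (x i)) (x (i + 1)) ≤ δ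

/-- `{x i ; t i}_{i = 0}^{k}` is a finite `(δ,T)`-chain of `H` for the flow `φ`. -/
def IsFinChainDT (φ : ℝ → M → M) (H : Set M) (δ T : ℝ) (k : ℕ) (x : ℕ → M) (t : ℕ → ℝ) :
    Prop :=
  (∀ i ≤ k, x i ∈ H) ∧ (∀ i ≤ k, T ≤ t i) ∧ ∀ i < k, dist (φ (t i) (x i)) (x (i + 1)) ≤ δ

/-- The chain trajectory `x₀ * s = φ (s - S i) (x i)` (for `S i ≤ s < S (i+1)`) of a bi-infinite
chain is ε-close, for all real times `s`, to the `g`-reparametrized orbit of `z`. -/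
def TracedVia (φ : ℝ → M → M) (ε : ℝ) (x : ℤ → M) (t : ℤ → ℝ) (g : ℝ → ℝ) (z : M) : Prop :=
  ∀ i : ℤ, ∀ s : ℝ, chainS t i ≤ s → s < chainS t (i + 1) →
    dist (φ (s - chainS t i) (x i)) (φ (g s) z) ≤ ε

/-- The chain trajectory of a finite chain is ε-close, for all times `s ∈ [0, S (k+1)]`,
to the `g`-reparametrized orbit of `z`. -/
def FinTracedVia (φ : ℝ → M → M) (ε : ℝ) (k : ℕ) (x : ℕ → M) (t : ℕ → ℝ)
    (g : ℝ → ℝ) (z : M) : Prop :=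
  (∀ i ≤ k, ∀ s : ℝ, finChainS t i ≤ s → s < finChainS t (i + 1) →
    dist (φ (s - finChainS t i) (x i)) (φ (g s) z) ≤ ε) ∧
  dist (φ (t k) (x k)) (φ (g (finChainS t (k + 1))) z) ≤ ε

/-- Weak pseudo-orbit tracing property. -/
def WPOTP (φ : ℝ → M → M) (H : Set M) : Prop :=
  ∀ ε > (0 : ℝ), ∃ δ > (0 : ℝ), ∃ T > (0 : ℝ), ∀ x t, IsChainDT φ H δ T x t →
    ∃ z : M, ∃ g : ℝ → ℝ, IsRep g ∧ TracedVia φ ε x t g z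

/-- Normal pseudo-orbit tracing property. -/
def NPOTP (φ : ℝ → M → M) (H : Set M) : Prop :=
  ∀ ε > (0 : ℝ), ∃ δ > (0 : ℝ), ∃ T > (0 : ℝ), ∀ x t, IsChainDT φ H δ T x t →
    ∃ z : M, ∃ g : ℝ → ℝ, IsRepStar g ∧ TracedVia φ ε x t g z

/-- Strong pseudo-orbit tracing property. -/
def SPOTP (φ : ℝ → M → M) (H : Set M) : Prop :=
  ∀ ε > (0 : ℝ), ∃ δ > (0 : ℝ), ∃ T > (0 : ℝ), ∀ x t, IsChainDT φ H δ T x t →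
    ∃ z : M, ∃ g : ℝ → ℝ, IsRepEps ε g ∧ TracedVia φ ε x t g z

/-- Finite pseudo-orbit tracing property. -/
def FPOTP (φ : ℝ → M → M) (H : Set M) : Prop :=
  ∀ ε > (0 : ℝ), ∃ δ > (0 : ℝ), ∃ T > (0 : ℝ), ∀ k x t, IsFinChainDT φ H δ T k x t →
    ∃ z : M, ∃ g : ℝ → ℝ, IsRep g ∧ FinTracedVia φ ε k x t g z

/-- Strong finite pseudo-orbit tracing property. -/
def SFPOTP (φ : ℝ → M → M) (H : Set M) : Prop :=
  ∀ ε > (0 : ℝ), ∃ δ > (0 : ℝ), ∃ T > (0 : ℝ), ∀ k x t, IsFinChainDT φ H δ T k x t →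
    ∃ z : M, ∃ g : ℝ → ℝ, IsRepEps ε g ∧ FinTracedVia φ ε k x t g z

/-!
Since `H` is compact and has no fixed point, there is `c > 0` such that every point of `H` is moved
by more than `c` at some time; points of small period never move that far, so `H` has no short
periods, and hence there is `e > 0` such that every point of `H` is moved at least `e` by the flow
in time `±t₀`. Now if the reparametrized orbit `s ↦ φ (g s) z` shadows a true orbit segment in `H`
closely for a unit of time, then `g` cannot drift by `t₀` from unit speed: at the moment the drift
reaches `t₀`, the shadowed point of `H` would be close to its own `±t₀`-translate. Along a traced
finite chain, whose pieces last at least one unit of time, this bounds the oscillation of `g - id`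
on unit windows by `2 t₀`, and averaging `g - id` over unit windows gives a reparametrization `G`
with `G - id` `2 t₀`-Lipschitz and `G` uniformly `2 t₀`-close to `g`; for `t₀` small `G` still
traces the chain and lies in `Rep(ε)`. Finally, the tracing pairs `(z, G)` obtained for the
truncations of a bi-infinite chain to `[-n, n]` lie in the compact space
`M × ∏ₛ [s - 2 t₀ |s|, s + 2 t₀ |s|]`, where they accumulate at a pair tracing the whole chain.
-/

open Set Filter
open scoped NNReal

theorem chainS_natCast (t : ℤ → ℝ) (n : ℕ) : chainS t n = ∑ j ∈ Finset.range n, t j := by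
  simp [chainS]

theorem chainS_neg_natCast (t : ℤ → ℝ) (n : ℕ) :
    chainS t (-n) = -∑ j ∈ Finset.range n, t (-(j + 1)) := by
  rcases n with _ | n
  · simp [chainS]
  · rw [chainS, if_neg (by omega)]
    simp

theorem chainS_succ (t : ℤ → ℝ) (i : ℤ) : chainS t (i + 1) = chainS t i + t i := by
  obtain ⟨n, rfl | rfl⟩ := Int.eq_nat_or_neg i
  · rw [← Nat.cast_succ, chainS_natCast, chainS_natCast, Finset.sum_range_succ]
  · cases n with
    | zero => simp [chainS]
    | succ n =>
      rw [show -((n + 1 : ℕ) : ℤ) + 1 = -n by push_cast; ring, chainS_neg_natCast,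
        chainS_neg_natCast, Finset.sum_range_succ]
      push_cast
      ring

theorem chainS_add_natCast_sub (t : ℤ → ℝ) (a : ℤ) (m : ℕ) :
    chainS t (a + m) - chainS t a = finChainS (fun j => t (a + j)) m := by
  induction m with
  | zero => simp [finChainS]
  | succ m ih =>
    rw [finChainS, Finset.sum_range_succ, ← finChainS, ← ih, Nat.cast_succ, ← add_assoc,
      chainS_succ]
    ring

theorem finChainS_zero (t : ℕ → ℝ) : finChainS t 0 = 0 := Finset.sum_range_zero t

theorem finChainS_succ (t : ℕ → ℝ) (i : ℕ) : finChainS t (i + 1) = finChainS t i + t i :=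
  Finset.sum_range_succ t i

theorem finChainS_mono {t : ℕ → ℝ} {k : ℕ} (ht : ∀ i ≤ k, 0 ≤ t i) {i j : ℕ} (hij : i ≤ j)
    (hj : j ≤ k + 1) : finChainS t i ≤ finChainS t j := by
  induction j, hij using Nat.le_induction with
  | base => rfl
  | succ j hij ih =>
    rw [finChainS_succ]
    linarith [ih (by omega), ht j (by omega)]

theorem exists_le_mem_Icc_of_mem_Icc {S : ℕ → ℝ} {u : ℝ} :
    ∀ k, u ∈ Icc (S 0) (S (k + 1)) → ∃ j ≤ k, u ∈ Icc (S j) (S (j + 1))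
  | 0, hu => ⟨0, le_rfl, hu⟩
  | k + 1, hu => by
    by_cases h : u ≤ S (k + 1)
    · obtain ⟨j, hj, hju⟩ := exists_le_mem_Icc_of_mem_Icc k ⟨hu.1, h⟩
      exact ⟨j, by omega, hju⟩
    · exact ⟨k + 1, le_rfl, (not_le.1 h).le, hu.2⟩

theorem IsFinChainDT.mono {φ : ℝ → M → M} {H : Set M} {δ δ' T T' : ℝ} {k : ℕ} {x : ℕ → M}
    {t : ℕ → ℝ} (h : IsFinChainDT φ H δ T k x t) (hδ : δ ≤ δ') (hT : T' ≤ T) :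
    IsFinChainDT φ H δ' T' k x t :=
  ⟨h.1, fun i hi => hT.trans (h.2.1 i hi), fun i hi => (h.2.2 i hi).trans hδ⟩

theorem FinTracedVia.mono {φ : ℝ → M → M} {ε ε' : ℝ} {k : ℕ} {x : ℕ → M} {t : ℕ → ℝ}
    {g : ℝ → ℝ} {z : M} (h : FinTracedVia φ ε k x t g z) (hε : ε ≤ ε') :
    FinTracedVia φ ε' k x t g z :=
  ⟨fun i hi s h1 h2 => (h.1 i hi s h1 h2).trans hε, h.2.trans hε⟩

theorem IsChainDT.isFinChainDT_shift {φ : ℝ → M → M} {H : Set M} {δ T : ℝ} {x : ℤ → M}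
    {t : ℤ → ℝ} (h : IsChainDT φ H δ T x t) (a : ℤ) (k : ℕ) :
    IsFinChainDT φ H δ T k (fun j => x (a + j)) (fun j => t (a + j)) := by
  refine ⟨fun i _ => h.1 _, fun i _ => h.2.1 _, fun i _ => ?_⟩
  simpa [add_assoc] using h.2.2 (a + i)

theorem FinTracedVia.dist_le_add_of_mem_Icc {ϕ : Flow ℝ M} {ε δ : ℝ} {k : ℕ} {x : ℕ → M}
    {t : ℕ → ℝ} {g : ℝ → ℝ} {z : M} (htr : FinTracedVia ϕ ε k x t g z) (hδ : 0 ≤ δ)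
    (ht : ∀ i ≤ k, 0 < t i) (hjump : ∀ i < k, dist (ϕ (t i) (x i)) (x (i + 1)) ≤ δ) {j : ℕ}
    (hj : j ≤ k) {w : ℝ} (hw : w ∈ Icc (finChainS t j) (finChainS t (j + 1))) :
    dist (ϕ (w - finChainS t j) (x j)) (ϕ (g w) z) ≤ ε + δ := by
  rcases hw.2.lt_or_eq with hlt | rfl
  · exact (htr.1 j hj w hw.1 hlt).trans (le_add_of_nonneg_right hδ)
  rw [show finChainS t (j + 1) - finChainS t j = t j by rw [finChainS_succ]; ring]
  rcases hj.lt_or_eq with hjk | rfl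
  · have hnext := htr.1 (j + 1) hjk (finChainS t (j + 1)) le_rfl
      (by rw [finChainS_succ t (j + 1)]; linarith [ht (j + 1) hjk])
    rw [sub_self, ϕ.map_zero_apply] at hnext
    linarith [dist_triangle (ϕ (t j) (x j)) (x (j + 1)) (ϕ (g (finChainS t (j + 1))) z),
      hjump j hjk]
  · exact htr.2.trans (le_add_of_nonneg_right hδ)

def TracedOnVia (φ : ℝ → M → M) (ε : ℝ) (x : ℤ → M) (t : ℤ → ℝ) (I : Set ℤ) (g : ℝ → ℝ)
    (z : M) : Prop :=
  ∀ i ∈ I, ∀ s : ℝ, chainS t i ≤ s → s < chainS t (i + 1) →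
    dist (φ (s - chainS t i) (x i)) (φ (g s) z) ≤ ε

theorem TracedOnVia.mono {φ : ℝ → M → M} {ε ε' : ℝ} {x : ℤ → M} {t : ℤ → ℝ} {I J : Set ℤ}
    {g : ℝ → ℝ} {z : M} (h : TracedOnVia φ ε x t J g z) (hIJ : I ⊆ J) (hε : ε ≤ ε') :
    TracedOnVia φ ε' x t I g z :=
  fun i hi s h₁ h₂ => (h i (hIJ hi) s h₁ h₂).trans hε

theorem tracedOnVia_Icc_of_finChainS {φ : ℝ → M → M} {ε : ℝ} {x : ℤ → M} {t : ℤ → ℝ}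
    {G : ℝ → ℝ} {z : M} (a : ℤ) (k : ℕ)
    (h : ∀ j ≤ k, ∀ s : ℝ, finChainS (fun j => t (a + j)) j ≤ s →
      s < finChainS (fun j => t (a + j)) (j + 1) →
      dist (φ (s - finChainS (fun j => t (a + j)) j) (x (a + j))) (φ (G s) z) ≤ ε) :
    TracedOnVia φ ε x t (Icc a (a + k)) (fun s => G (s - chainS t a)) z := by
  rintro i ⟨hai, hik⟩ s hs₁ hs₂
  obtain ⟨j, rfl⟩ : ∃ j : ℕ, i = a + j := ⟨(i - a).toNat, by omega⟩
  have hS := chainS_add_natCast_sub t a j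
  have hS' := chainS_add_natCast_sub t a (j + 1)
  rw [Nat.cast_succ, ← add_assoc] at hS'
  have := h j (by omega) (s - chainS t a) (by linarith) (by linarith)
  rwa [← hS, sub_sub_sub_cancel_right] at this

theorem abs_sub_le_two_mul_of_forall_segment {S : ℕ → ℝ} {k : ℕ}
    (hS : ∀ j ≤ k, S j + 1 ≤ S (j + 1)) {f : ℝ → ℝ} {c : ℝ}
    (hf : ∀ j ≤ k, ∀ u v, S j ≤ u → u ≤ v → v ≤ S (j + 1) → v ≤ u + 1 → |f v - f u| ≤ c) :
    ∀ u ∈ Icc (S 0) (S (k + 1)), ∀ v ∈ Icc (S 0) (S (k + 1)), |v - u| ≤ 1 →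
      |f v - f u| ≤ 2 * c := by
  intro u hu v hv huv
  wlog h : u ≤ v generalizing u v
  · rw [abs_sub_comm]
    exact this v hv u hu (by rwa [abs_sub_comm]) (le_of_not_ge h)
  have hvu : v ≤ u + 1 := by linarith [le_abs_self (v - u)]
  obtain ⟨j, hj, hju⟩ := exists_le_mem_Icc_of_mem_Icc k hu
  have hc : 0 ≤ c := (abs_nonneg _).trans (hf j hj u u hju.1 le_rfl hju.2 (by linarith))
  by_cases hvj : v ≤ S (j + 1)
  · linarith [hf j hj u v hju.1 h hvj hvu]
  -- otherwise `v` lies in the next segment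
  have hjk : j + 1 ≤ k := by
    by_contra
    obtain rfl : j = k := by omega
    exact hvj hv.2
  have h₁ := hf j hj u (S (j + 1)) hju.1 hju.2 le_rfl (by linarith)
  have h₂ := hf (j + 1) hjk (S (j + 1)) v le_rfl (by linarith)
    (by linarith [hS (j + 1) hjk, hju.2]) (by linarith [hju.2])
  linarith [abs_sub_le (f v) (f (S (j + 1))) (f u)]

theorem exists_lipschitzWith_abs_sub_le {k : ℝ → ℝ} (hk : Continuous k) {c : ℝ≥0}
    (hosc : ∀ u v, |v - u| ≤ 1 → |k v - k u| ≤ c) :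
    ∃ K : ℝ → ℝ, LipschitzWith c K ∧ ∀ w, |K w - k w| ≤ c := by
  set F : ℝ → ℝ := fun x => ∫ r in (0 : ℝ)..x, k r
  have hF : ∀ x, HasDerivAt F (k x) x := fun x => (hk.integral_hasStrictDerivAt 0 x).hasDerivAt
  have hK : ∀ u, HasDerivAt (fun u => F (u + 1) - F u) (k (u + 1) - k u) u := fun u =>
    ((hF (u + 1)).comp_add_const u 1).sub (hF u)
  refine ⟨fun u => ∫ r in u..u + 1, k r, ?_, fun w => ?_⟩
  · have hKF : (fun u => ∫ r in u..u + 1, k r) = fun u => F (u + 1) - F u := funext fun u =>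
      (intervalIntegral.integral_interval_sub_left (hk.intervalIntegrable _ _)
        (hk.intervalIntegrable _ _)).symm
    rw [hKF]
    refine lipschitzWith_of_nnnorm_deriv_le (fun u => (hK u).differentiableAt) fun u => ?_
    rw [(hK u).deriv, ← NNReal.coe_le_coe, coe_nnnorm, Real.norm_eq_abs]
    exact hosc u (u + 1) (by simp)
  · have hsub : (∫ r in w..w + 1, k r) - k w = ∫ r in w..w + 1, (k r - k w) := by
      rw [intervalIntegral.integral_sub (hk.intervalIntegrable _ _) intervalIntegrable_const,
        intervalIntegral.integral_const]
      simp
    rw [hsub]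
    have hbound : ∀ r ∈ uIoc w (w + 1), ‖k r - k w‖ ≤ c := fun r hr => by
      rw [uIoc_of_le (by linarith)] at hr
      exact hosc w r (by rw [abs_of_pos (by linarith [hr.1])]; linarith [hr.2])
    simpa using intervalIntegral.norm_integral_le_of_norm_le_const hbound

theorem exists_lipschitzWith_abs_sub_le_of_Icc {k : ℝ → ℝ} {a b : ℝ} (hab : a ≤ b)
    (hk : ContinuousOn k (Icc a b)) {c : ℝ≥0}
    (hosc : ∀ u ∈ Icc a b, ∀ v ∈ Icc a b, |v - u| ≤ 1 → |k v - k u| ≤ c) :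
    ∃ K : ℝ → ℝ, LipschitzWith c K ∧ ∀ w ∈ Icc a b, |K w - k w| ≤ c := by
  obtain ⟨K, hK, hclose⟩ := exists_lipschitzWith_abs_sub_le
    (hk.comp_continuous (continuous_subtype_val.comp continuous_projIcc) fun w =>
      (projIcc a b hab w).2)
    fun u v huv => hosc _ (projIcc a b hab u).2 _ (projIcc a b hab v).2
      ((abs_projIcc_sub_projIcc hab).trans huv)
  exact ⟨K, hK, fun w hw => by simpa [projIcc_of_mem hab hw] using hclose w⟩

theorem lipschitzWith_translate_sub_self {G : ℝ → ℝ} {K : ℝ≥0}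
    (hG : LipschitzWith K fun s => G s - s) (a b : ℝ) :
    LipschitzWith K fun s => G (s - a) - b - s := by
  refine .of_dist_le_mul fun u v => ?_
  have := hG.dist_le_mul (u - a) (v - a)
  rw [Real.dist_eq, Real.dist_eq] at this ⊢
  convert this using 2 <;> ring_nf

theorem isRepEps_of_lipschitzWith {G : ℝ → ℝ} {K : ℝ≥0} (hK : (K : ℝ) < 1) {ε : ℝ}
    (hKε : (K : ℝ) ≤ ε) (h0 : G 0 = 0) (hG : LipschitzWith K fun s => G s - s) : IsRepEps ε G := by
  have hdist : ∀ u v, |(G u - u) - (G v - v)| ≤ K * |u - v| := fun u v => by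
    simpa only [Real.dist_eq] using hG.dist_le_mul u v
  have hbound : ∀ s, |G s - s| ≤ K * |s| := by simpa [h0] using fun s => hdist s 0
  have hcont : Continuous G := (hG.continuous.add continuous_id).congr fun s => sub_add_cancel _ _
  refine ⟨⟨⟨hcont, fun u v huv => ?_, h0⟩, hcont.surjective ?_ ?_⟩, fun s t hst => ?_⟩
  · have := abs_le.1 (hdist v u)
    rw [abs_of_pos (sub_pos.2 huv)] at this
    nlinarith
  · refine tendsto_atTop_mono' _ ((eventually_ge_atTop 0).mono fun s hs => ?_)
      (tendsto_id.const_mul_atTop (sub_pos.2 hK))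
    have := abs_le.1 (hbound s)
    rw [abs_of_nonneg hs] at this
    simp only [id]
    nlinarith
  · refine tendsto_atBot_mono' _ ((eventually_le_atBot 0).mono fun s hs => ?_)
      (tendsto_id.const_mul_atBot (sub_pos.2 hK))
    have := abs_le.1 (hbound s)
    rw [abs_of_nonpos hs] at this
    simp only [id]
    nlinarith
  · rw [show (G s - G t) / (s - t) - 1 = ((G s - s) - (G t - t)) / (s - t) by
      field_simp [sub_ne_zero.2 hst]; ring,
      abs_div, div_le_iff₀ (abs_pos.2 (sub_ne_zero.2 hst))]
    exact (hdist s t).trans (by gcongr)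

namespace Flow

variable (ϕ : Flow ℝ M)

theorem map_zsmul_of_map_eq {p : M} {s : ℝ} (h : ϕ s p = p) (n : ℤ) : ϕ (n • s) p = p := by
  let := ϕ.toAddAction
  exact (AddAction.stabilizer ℝ p).zsmul_mem h n

theorem exists_pos_forall_dist_flow_flow_lt [CompactSpace M] (L : ℝ) {ε : ℝ} (hε : 0 < ε) :
    ∃ η > 0, ∀ s s' : ℝ, ∀ x y : M, |s| ≤ L → |s'| ≤ L → |s - s'| < η → dist x y < η →
      dist (ϕ s x) (ϕ s' y) < ε := by
  have huc := (isCompact_Icc.prod isCompact_univ).uniformContinuousOn_of_continuous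
    (s := Icc (-L) L ×ˢ (univ : Set M)) ϕ.cont'.continuousOn
  obtain ⟨η, hη, h⟩ := Metric.uniformContinuousOn_iff.1 huc ε hε
  refine ⟨η, hη, fun s s' x y hs hs' hss' hxy => h (s, x) ⟨abs_le.1 hs, trivial⟩ (s', y)
    ⟨abs_le.1 hs', trivial⟩ ?_⟩
  rw [Prod.dist_eq, Real.dist_eq]
  exact max_lt hss' hxy

theorem exists_pos_forall_dist_flow_le [CompactSpace M] {ε : ℝ} (hε : 0 < ε) :
    ∃ D > 0, ∀ s : ℝ, |s| ≤ D → ∀ x : M, dist (ϕ s x) x ≤ ε := by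
  obtain ⟨η, hη, h⟩ := ϕ.exists_pos_forall_dist_flow_flow_lt 1 hε
  refine ⟨min (η / 2) 1, by positivity, fun s hs x => ?_⟩
  have hs1 : |s| ≤ 1 := hs.trans (min_le_right _ _)
  have hsη : |s - 0| < η := by rw [sub_zero]; linarith [min_le_left (η / 2) 1]
  simpa [ϕ.map_zero_apply] using (h s 0 x x hs1 (by simp) hsη (by simpa using hη)).le

theorem exists_pos_forall_dist_flow_flow_le [CompactSpace M] (L : ℝ) {ε : ℝ} (hε : 0 < ε) :
    ∃ η > 0, ∀ x y : M, dist x y ≤ η → ∀ s : ℝ, |s| ≤ L → dist (ϕ s x) (ϕ s y) ≤ ε := by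
  obtain ⟨η, hη, h⟩ := ϕ.exists_pos_forall_dist_flow_flow_lt L hε
  exact ⟨η / 2, by positivity, fun x y hxy s hs =>
    (h s s x y hs hs (by simpa using hη) (by linarith)).le⟩

theorem exists_pos_forall_exists_lt_dist {H : Set M} (hH : IsCompact H)
    (hfix : ∀ p ∈ H, ¬ ∀ τ : ℝ, ϕ τ p = p) :
    ∃ c > 0, ∀ p ∈ H, ∃ τ : ℝ, c < dist (ϕ τ p) p := by
  by_contra! hcon
  set C : ℕ → Set M := fun n => H ∩ {p | ∀ τ, dist (ϕ τ p) p ≤ 1 / (n + 1)}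
  have hclosed : ∀ n, IsClosed (C n) := fun n => hH.isClosed.inter <| by
    simp only [ofPred_forall]
    exact isClosed_iInter fun τ => isClosed_le (by fun_prop) continuous_const
  obtain ⟨p, hp⟩ := IsCompact.nonempty_iInter_of_sequence_nonempty_isCompact_isClosed C
    (fun n p hp => ⟨hp.1, fun τ => (hp.2 τ).trans (by gcongr; simp)⟩)
    (fun n => hcon _ (by positivity)) (hH.of_isClosed_subset (hclosed 0) inter_subset_left) hclosed
  refine hfix p (mem_iInter.1 hp 0).1 fun τ => eq_of_forall_dist_le fun ε hε => ?_
  obtain ⟨n, hn⟩ := exists_nat_one_div_lt hε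
  exact ((mem_iInter.1 hp n).2 τ).trans hn.le

theorem exists_pos_forall_flow_ne [CompactSpace M] {H : Set M} (hH : IsCompact H)
    (hfix : ∀ p ∈ H, ¬ ∀ τ : ℝ, ϕ τ p = p) :
    ∃ T > 0, ∀ p ∈ H, ∀ s : ℝ, 0 < s → s ≤ T → ϕ s p ≠ p := by
  obtain ⟨c, hc, hmove⟩ := ϕ.exists_pos_forall_exists_lt_dist hH hfix
  obtain ⟨D, hD, hdisp⟩ := ϕ.exists_pos_forall_dist_flow_le hc
  refine ⟨D, hD, fun p hp s hs hsD hper => ?_⟩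
  obtain ⟨τ, hτ⟩ := hmove p hp
  -- `s` is a period of `p`, so the orbit of `p` is already swept out in times `[0, s)`
  have hτ' : ϕ τ p = ϕ (toIcoMod hs 0 τ) p := by
    conv_lhs => rw [← toIcoMod_add_toIcoDiv_zsmul hs 0 τ]
    rw [ϕ.map_add, ϕ.map_zsmul_of_map_eq hper]
  have hr := toIcoMod_mem_Ico hs 0 τ
  have := hdisp _ (by rw [abs_of_nonneg hr.1]; linarith [hr.2]) p
  linarith [hτ' ▸ this]

theorem exists_pos_le_dist_flow {H : Set M} (hH : IsCompact H) {t₀ : ℝ}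
    (hper : ∀ p ∈ H, ϕ t₀ p ≠ p) :
    ∃ e > 0, ∀ p ∈ H, ∀ F : ℝ, |F| = t₀ → e ≤ dist (ϕ F p) p := by
  have hK : IsCompact (({t₀, -t₀} : Set ℝ) ×ˢ H) := (toFinite _).isCompact.prod hH
  have hpos : ∀ q ∈ ({t₀, -t₀} : Set ℝ) ×ˢ H, 0 < dist (ϕ q.1 q.2) q.2 := by
    rintro ⟨F, p⟩ ⟨hF | hF, hp⟩ <;> dsimp only at hF hp ⊢ <;> subst hF <;> rw [dist_pos]
    · exact hper p hp
    · intro h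
      apply hper p hp
      conv_lhs => rw [← h, ← ϕ.map_add, add_neg_cancel, ϕ.map_zero_apply]
  obtain ⟨e, he, hmin⟩ := hK.exists_forall_le' (by fun_prop) hpos
  refine ⟨e, he, fun p hp F hF => hmin (F, p) ⟨?_, hp⟩⟩
  rcases abs_eq (hF ▸ abs_nonneg F) |>.1 hF with h | h <;> simp [h]

theorem abs_sub_sub_le_of_dist_le {H : Set M} (hH : IsInvariant ϕ H) {t₀ ε ε' L : ℝ}
    (ht₀ : 0 ≤ t₀) (hsep : ∀ p ∈ H, ∀ F : ℝ, |F| = t₀ → ε + ε' < dist (ϕ F p) p)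
    (hmod : ∀ x y : M, dist x y ≤ ε → ∀ s : ℝ, |s| ≤ L + t₀ → dist (ϕ s x) (ϕ s y) ≤ ε')
    {g : ℝ → ℝ} (hg : Continuous g) {q z : M} (hq : q ∈ H) {a u v : ℝ} (huv : u ≤ v)
    (hvu : v ≤ u + L) (htr : ∀ w ∈ Icc u v, dist (ϕ (w - a) q) (ϕ (g w) z) ≤ ε) :
    |(g v - v) - (g u - u)| ≤ t₀ := by
  by_contra! hlt
  set F : ℝ → ℝ := fun w => (g w - w) - (g u - u)
  obtain ⟨w, hw, hFw⟩ : ∃ w ∈ Icc u v, |F w| = t₀ :=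
    intermediate_value_Icc huv (by fun_prop : Continuous fun w => |F w|).continuousOn
      ⟨by simpa [F] using ht₀, hlt.le⟩
  have hgw : |g w - g u| ≤ L + t₀ := by
    have := abs_le.1 hFw.le
    rw [abs_le]
    constructor <;> linarith [hw.1, hw.2]
  -- flow the two `ε`-close points at time `u` for the time `g w - g u` ...
  have hfar := hmod _ _ (htr u ⟨le_rfl, huv⟩) _ hgw
  rw [← ϕ.map_add, ← ϕ.map_add, sub_add_cancel] at hfar
  -- ... which moves the point of `H` at time `w` by exactly `F w`
  have hsep' := hsep _ (hH (w - a) hq) (F w) hFw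
  rw [← ϕ.map_add, show F w + (w - a) = g w - g u + (u - a) by ring] at hsep'
  linarith [dist_triangle (ϕ (g w - g u + (u - a)) q) (ϕ (g w) z) (ϕ (w - a) q),
    dist_comm (ϕ (g w) z) (ϕ (w - a) q), htr w hw]

theorem exists_pos_abs_sub_le_of_finTracedVia [CompactSpace M] {H : Set M} (hHc : IsCompact H)
    (hH : IsInvariant ϕ H) {t₀ : ℝ} (ht₀ : 0 < t₀) (ht₀1 : t₀ ≤ 1)
    (hper : ∀ p ∈ H, ϕ t₀ p ≠ p) :
    ∃ ε₀ > 0, ∀ k x t g z, IsFinChainDT ϕ H ε₀ 1 k x t → Continuous g →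
      FinTracedVia ϕ ε₀ k x t g z →
      ∀ u ∈ Icc 0 (finChainS t (k + 1)), ∀ v ∈ Icc 0 (finChainS t (k + 1)), |v - u| ≤ 1 →
        |(g v - v) - (g u - u)| ≤ 2 * t₀ := by
  obtain ⟨e, he, hsep⟩ := ϕ.exists_pos_le_dist_flow hHc hper
  obtain ⟨η, hη, hmod⟩ := ϕ.exists_pos_forall_dist_flow_flow_le 2 (by positivity : 0 < e / 3)
  refine ⟨min (η / 2) (e / 6), by positivity, fun k x t g z hchain hg htr => ?_⟩
  have hε₀η : min (η / 2) (e / 6) + min (η / 2) (e / 6) ≤ η := by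
    linarith [min_le_left (η / 2) (e / 6)]
  have hε₀e : min (η / 2) (e / 6) + min (η / 2) (e / 6) ≤ e / 3 := by
    linarith [min_le_right (η / 2) (e / 6)]
  rw [← finChainS_zero t]
  refine abs_sub_le_two_mul_of_forall_segment
    (fun j hj => by rw [finChainS_succ]; linarith [hchain.2.1 j hj])
    fun j hj u v hju huv hvj hvu => ϕ.abs_sub_sub_le_of_dist_le hH ht₀.le
      (fun p hp F hF => by linarith [hsep p hp F hF]) (L := 1)
      (fun x y hxy s hs => hmod x y (hxy.trans hε₀η) s (by linarith)) hg (hchain.1 j hj) huv hvu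
      fun w hw => htr.dist_le_add_of_mem_Icc (by positivity)
        (fun i hi => by linarith [hchain.2.1 i hi]) hchain.2.2 hj ⟨hju.trans hw.1, hw.2.trans hvj⟩

theorem exists_lipschitzWith_of_finTracedVia {ε₁ ε₂ : ℝ} {c : ℝ≥0} {k : ℕ} {x : ℕ → M}
    {t : ℕ → ℝ} {g : ℝ → ℝ} {z : M} (ht : ∀ i ≤ k, 0 ≤ t i) (hg : Continuous g)
    (htr : FinTracedVia ϕ ε₁ k x t g z)
    (hosc : ∀ u ∈ Icc 0 (finChainS t (k + 1)), ∀ v ∈ Icc 0 (finChainS t (k + 1)),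
      |v - u| ≤ 1 → |(g v - v) - (g u - u)| ≤ c)
    (hdisp : ∀ s : ℝ, |s| ≤ c → ∀ y : M, dist (ϕ s y) y ≤ ε₂) :
    ∃ G : ℝ → ℝ, (LipschitzWith c fun s => G s - s) ∧
      ∀ j ≤ k, ∀ s : ℝ, finChainS t j ≤ s → s < finChainS t (j + 1) →
        dist (ϕ (s - finChainS t j) (x j)) (ϕ (G s) z) ≤ ε₁ + ε₂ := by
  have hB : 0 ≤ finChainS t (k + 1) := finChainS_zero t ▸ finChainS_mono ht (Nat.zero_le _) le_rfl
  obtain ⟨K, hK, hclose⟩ :=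
    exists_lipschitzWith_abs_sub_le_of_Icc hB (hg.sub continuous_id).continuousOn hosc
  refine ⟨fun s => K s + s, by simpa using hK, fun j hj s hs₁ hs₂ => ?_⟩
  have hs : s ∈ Icc 0 (finChainS t (k + 1)) :=
    ⟨(finChainS_zero t ▸ finChainS_mono ht (Nat.zero_le j) (by omega)).trans hs₁,
      hs₂.le.trans (finChainS_mono ht (by omega) le_rfl)⟩
  have hmove : dist (ϕ (K s + s) z) (ϕ (g s) z) ≤ ε₂ := by
    rw [show K s + s = (K s - (g s - s)) + g s by ring, ϕ.map_add]
    exact hdisp _ (hclose s hs) _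
  linarith [dist_triangle (ϕ (s - finChainS t j) (x j)) (ϕ (g s) z) (ϕ (K s + s) z),
    dist_comm (ϕ (g s) z) (ϕ (K s + s) z), htr.1 j hj s hs₁ hs₂]

theorem isClosed_setOf_tracedOnVia (ε : ℝ) (x : ℤ → M) (t : ℤ → ℝ) (I : Set ℤ) :
    IsClosed {p : M × (ℝ → ℝ) | TracedOnVia ϕ ε x t I p.2 p.1} := by
  simp only [TracedOnVia, ofPred_forall]
  exact isClosed_biInter fun i _ => isClosed_iInter fun s => isClosed_iInter fun _ =>
    isClosed_iInter fun _ => isClosed_le (by fun_prop) continuous_const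

theorem exists_tracedVia_of_forall_tracedOnVia [CompactSpace M] {ε : ℝ} {x : ℤ → M}
    {t : ℤ → ℝ} {K : ℝ≥0}
    (h : ∀ n : ℕ, ∃ z G, (LipschitzWith K fun s => G s - s) ∧
      TracedOnVia ϕ ε x t (Icc (-n) n) G z) :
    ∃ z G, G 0 = 0 ∧ (LipschitzWith K fun s => G s - s) ∧ TracedVia ϕ ε x t G z := by
  set C : ℕ → Set (M × (ℝ → ℝ)) := fun n => {p | p.2 0 = 0 ∧
    (LipschitzWith K fun s => p.2 s - s) ∧ TracedOnVia ϕ ε x t (Icc (-n) n) p.2 p.1}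
  have hclosed : ∀ n, IsClosed (C n) := fun n =>
    (isClosed_eq (by fun_prop) continuous_const).inter
      (((isClosed_setOfPred_lipschitzWith K).preimage (by fun_prop)).inter
        (ϕ.isClosed_setOf_tracedOnVia ε x t _))
  have hbdd : C 0 ⊆ univ ×ˢ Set.pi univ fun s : ℝ => Icc (s - (K : ℝ) * |s|) (s + K * |s|) := by
    rintro ⟨z, G⟩ ⟨hG0, hG, -⟩
    have := fun s => hG.dist_le_mul s 0
    simp only [show G 0 = 0 from hG0, Real.dist_eq, sub_zero] at this
    exact ⟨trivial, fun s _ => ⟨by linarith [(abs_le.1 (this s)).1],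
      by linarith [(abs_le.1 (this s)).2]⟩⟩
  obtain ⟨⟨z, G⟩, hzG⟩ := IsCompact.nonempty_iInter_of_sequence_nonempty_isCompact_isClosed C
    (fun n p hp => ⟨hp.1, hp.2.1, fun i hi => hp.2.2 i
      (Icc_subset_Icc (by push_cast; omega) (by push_cast; omega) hi)⟩)
    (fun n => by
      obtain ⟨z, G, hG, htr⟩ := h n
      refine ⟨(ϕ (G 0) z, fun s => G s - G 0), sub_self _,
        by simpa using lipschitzWith_translate_sub_self hG 0 (G 0), fun i hi s h₁ h₂ => ?_⟩
      rw [← ϕ.map_add, sub_add_cancel]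
      exact htr i hi s h₁ h₂)
    ((isCompact_univ.prod (isCompact_univ_pi fun _ => isCompact_Icc)).of_isClosed_subset
      (hclosed 0) hbdd)
    hclosed
  rw [mem_iInter] at hzG
  exact ⟨z, G, (hzG 0).1, (hzG 0).2.1, fun i => (hzG i.natAbs).2.2 i ⟨by omega, by omega⟩⟩

end Flow

theorem nonsingular_fpotp_implies_spotp {M : Type*} [MetricSpace M] [CompactSpace M]
    (φ : ℝ → M → M)
    (hflow_cont : Continuous fun p : ℝ × M => φ p.1 p.2)
    (hflow_zero : ∀ x : M, φ 0 x = x)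
    (hflow_add : ∀ s t : ℝ, ∀ x : M, φ (s + t) x = φ s (φ t x))
    (H : Set M) (hHcomp : IsCompact H) (hHinv : ∀ τ : ℝ, φ τ '' H = H)
    (hHnonsing : ∀ p ∈ H, ¬ ∀ τ : ℝ, φ τ p = p)
    (hF : FPOTP φ H) : SPOTP φ H := by
  obtain ⟨ϕ, rfl⟩ : ∃ ϕ : Flow ℝ M, ⇑ϕ = φ := ⟨⟨φ, hflow_cont, hflow_add, hflow_zero⟩, rfl⟩
  have hH : IsInvariant ϕ H := (ϕ.isInvariant_iff_image_eq H).2 hHinv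
  intro ε hε
  obtain ⟨Tp, hTp, hper⟩ := ϕ.exists_pos_forall_flow_ne hHcomp hHnonsing
  obtain ⟨D, hD, hdisp⟩ := ϕ.exists_pos_forall_dist_flow_le (half_pos hε)
  obtain ⟨t₀, ht₀, ht₀'⟩ :=
    exists_between (lt_min (lt_min hTp (half_pos hD)) (lt_min (half_pos hε) one_half_pos))
  obtain ⟨⟨ht₀Tp, ht₀D⟩, ht₀ε, ht₀1⟩ := (lt_min_iff.1 ht₀').imp lt_min_iff.1 lt_min_iff.1
  set K : ℝ≥0 := ⟨2 * t₀, by positivity⟩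
  have hK : (K : ℝ) = 2 * t₀ := rfl
  obtain ⟨ε₀, hε₀, hosc⟩ := ϕ.exists_pos_abs_sub_le_of_finTracedVia hHcomp hH ht₀
    (by linarith) fun p hp => hper p hp t₀ ht₀ ht₀Tp.le
  obtain ⟨δ, hδ, T, hT, htrace⟩ := hF (min ε₀ (ε / 2)) (by positivity)
  refine ⟨min δ ε₀, by positivity, max T 1, by positivity, fun x t hchain => ?_⟩
  suffices hwin : ∀ n : ℕ, ∃ z G, (LipschitzWith K fun s => G s - s) ∧
      TracedOnVia ϕ ε x t (Icc (-n) n) G z by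
    obtain ⟨z, G, hG0, hG, htr⟩ := ϕ.exists_tracedVia_of_forall_tracedOnVia hwin
    exact ⟨z, G, isRepEps_of_lipschitzWith (by linarith) (by linarith) hG0 hG, htr⟩
  intro n
  have hfin := hchain.isFinChainDT_shift (-n) (2 * n)
  obtain ⟨z, g, ⟨hg, -⟩, hgtr⟩ := htrace _ _ _ (hfin.mono (min_le_left _ _) (le_max_left _ _))
  obtain ⟨G, hG, hGtr⟩ := ϕ.exists_lipschitzWith_of_finTracedVia (c := K)
    (fun i hi => by linarith [hfin.2.1 i hi, le_max_right T 1]) hg hgtr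
    (hosc _ _ _ _ _ (hfin.mono (min_le_right _ _) (le_max_right _ _)) hg
      (hgtr.mono (min_le_left _ _)))
    fun s hs => hdisp s (by linarith)
  refine ⟨z, _, by simpa using lipschitzWith_translate_sub_self hG (chainS t (-n)) 0,
    (tracedOnVia_Icc_of_finChainS _ _ hGtr).mono (Icc_subset_Icc le_rfl (by push_cast; omega))
      (by linarith [min_le_right ε₀ (ε / 2)])⟩
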